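/- If 0 lies in the interior of U ⊆ ℝ^k, then the convex cone generated by {X₁(γ(t)),…,X_k(γ(t))} is contained in the set 𝒱¹_{Σ₂}(γ(t)) of first-order elementary perturbation vectors of a control-affine system at γ(t). -/

import Mathlib

/-! Since `U` is a neighbourhood of `u`, every direction `d` is a positive multiple `l • (u₁ - u)`
with `u₁ ∈ U` (take `u₁ = u + t • d` for small `t > 0` and `l = t⁻¹`). Hence the perturbation
vectors `∑ c, l (u₁ c - u c) • X c` exhaust the whole linear span of the `X c`, which contains
the cone over their convex hull. -/

open Set Filter Topology

theorem exists_mem_pos_smul_sub_eq_of_mem_nhds {E : Type*} [AddCommGroup E] [Module ℝ E]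
    [TopologicalSpace E] [ContinuousAdd E] [ContinuousSMul ℝ E] {U : Set E} {u : E}
    (hU : U ∈ 𝓝 u) (d : E) : ∃ u₁ ∈ U, ∃ l : ℝ, 0 < l ∧ d = l • (u₁ - u) := by
  have hline : Tendsto (fun t : ℝ => u + t • d) (𝓝 0) (𝓝 u) := by
    simpa using (tendsto_const_nhds.add (tendsto_id.smul_const d) : Tendsto _ (𝓝 (0 : ℝ)) _)
  obtain ⟨t, ht_mem, ht_pos⟩ :=
    ((hline.mono_left nhdsWithin_le_nhds).eventually hU).and self_mem_nhdsWithin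
      |>.exists (f := 𝓝[>] (0 : ℝ))
  refine ⟨u + t • d, ht_mem, t⁻¹, inv_pos.mpr ht_pos, ?_⟩
  rw [add_sub_cancel_left, smul_smul, inv_mul_cancel₀ ht_pos.ne', one_smul]

theorem exists_eq_sum_smul_sub_of_mem_span {ι E : Type*} [Fintype ι] [AddCommGroup E]
    [Module ℝ E] {U : Set (ι → ℝ)} {u : ι → ℝ} (hU : U ∈ 𝓝 u) {X : ι → E} {v : E}
    (hv : v ∈ Submodule.span ℝ (range X)) :
    ∃ u₁ ∈ U, ∃ l : ℝ, 0 < l ∧ v = ∑ c, (l * (u₁ c - u c)) • X c := by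
  obtain ⟨d, rfl⟩ := (Submodule.mem_span_range_iff_exists_fun ℝ).mp hv
  obtain ⟨u₁, hu₁, l, hl, hd⟩ := exists_mem_pos_smul_sub_eq_of_mem_nhds hU d
  exact ⟨u₁, hu₁, l, hl, by simp [hd]⟩

theorem convexHull_subset_span {𝕜 E : Type*} [Semiring 𝕜] [PartialOrder 𝕜] [AddCommMonoid E]
    [Module 𝕜 E] (s : Set E) : convexHull 𝕜 s ⊆ Submodule.span 𝕜 s :=
  convexHull_min Submodule.subset_span (Submodule.span 𝕜 s).convex

theorem stmt_3_general {m k : ℕ}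
    (Xc : Fin k → (Fin m → ℝ) → (Fin m → ℝ))
    (U : Set (Fin k → ℝ)) (hUopen : IsOpen U)
    (u : Fin k → ℝ) (hu : u ∈ U)
    (x : Fin m → ℝ)   -- the point γ(t₀)
    (V1 : Set (Fin m → ℝ))
    (hV1 : V1 = {v | ∃ u₁ ∈ U, ∃ l : ℝ, 0 < l ∧ v = ∑ c, (l * (u₁ c - u c)) • Xc c x}) :
    ∀ v : Fin m → ℝ,
      (∃ r : ℝ, 0 < r ∧ ∃ w ∈ convexHull ℝ (Set.range fun c => Xc c x), v = r • w) →
      v ∈ V1 := by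
  rintro _ ⟨r, -, w, hw, rfl⟩
  subst hV1
  exact exists_eq_sum_smul_sub_of_mem_span (hUopen.mem_nhds hu)
    (Submodule.smul_mem _ r (convexHull_subset_span _ hw))

/-- if 0 ∈ int U then cone(conv{X₁(γ(t)),…,X_k(γ(t))}) is contained
in the set 𝒱¹ of first-order elementary perturbation vectors
{Σ_c l₁(u₁^c − u^c(t₀)) X_c(γ(t₀)) : u₁ ∈ U, l₁ > 0}. -/
theorem stmt_3 {m k : ℕ}
    (X₀ : (Fin m → ℝ) → (Fin m → ℝ)) (Xc : Fin k → (Fin m → ℝ) → (Fin m → ℝ))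
    (U : Set (Fin k → ℝ)) (hUopen : IsOpen U)
    (h0 : (0 : Fin k → ℝ) ∈ interior U)
    (u : Fin k → ℝ) (hu : u ∈ U)
    (x : Fin m → ℝ)   -- the point γ(t₀)
    (V1 : Set (Fin m → ℝ))
    (hV1 : V1 = {v | ∃ u₁ ∈ U, ∃ l : ℝ, 0 < l ∧ v = ∑ c, (l * (u₁ c - u c)) • Xc c x}) :
    ∀ v : Fin m → ℝ,
      (∃ r : ℝ, 0 < r ∧ ∃ w ∈ convexHull ℝ (Set.range fun c => Xc c x), v = r • w) →
      v ∈ V1 :=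
  stmt_3_general Xc U hUopen u hu x V1 hV1
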